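/- μ ∼_{ε'}^c ν (i.e., d^c(μ,ν) ≤ ε') if and only if there exists a family of symmetric relations (R_ε^c)_{ε>0} on subdistributions such that μ R_{ε'}^c ν and whenever ρ R_ε^c σ: (i) |ρ(S) − σ(S)| ≤ ε, and (ii) for each action a, if ρ →^a ρ' and σ →^a σ' then ρ' R_{ε/c}^c σ'. -/

import Mathlib

open MeasureTheory ProbabilityTheory Filter

/-- A (sub)distribution: a measure of total mass at most 1. -/
def IsSubdist {S : Type*} [MeasurableSpace S] (μ : Measure S) : Prop :=
  μ Set.univ ≤ 1

/-- A family of sub-Markov transition kernels (labelled Markov process). -/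
def IsSubMarkov {S A : Type*} [MeasurableSpace S] (τ : A → Kernel S S) : Prop :=
  ∀ a s, τ a s Set.univ ≤ 1

/-- One-step transition on subdistributions: μ →^a (step τ a μ). -/
noncomputable def step {S A : Type*} [MeasurableSpace S] (τ : A → Kernel S S)
    (a : A) (μ : Measure S) : Measure S :=
  μ.bind (τ a)

/-- Multi-step transition along a word. -/
noncomputable def wstep {S A : Type*} [MeasurableSpace S] (τ : A → Kernel S S) :
    List A → Measure S → Measure S
  | [], μ => μ
  | a :: w, μ => wstep τ w (step τ a μ)

/-- Subdistribution bisimulation relation. -/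
def IsDBisim {S A : Type*} [MeasurableSpace S] (τ : A → Kernel S S)
    (R : Measure S → Measure S → Prop) : Prop :=
  Symmetric R ∧
  (∀ μ ν, R μ ν → IsSubdist μ ∧ IsSubdist ν) ∧
  ∀ μ ν, R μ ν → μ Set.univ = ν Set.univ ∧ ∀ a, R (step τ a μ) (step τ a ν)

/-- Subdistribution bisimilarity. -/
def DBisim {S A : Type*} [MeasurableSpace S] (τ : A → Kernel S S)
    (μ ν : Measure S) : Prop :=
  ∃ R, IsDBisim τ R ∧ R μ ν

/-- The discounted trace pseudometric `d^c`. -/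
noncomputable def dC {S A : Type*} [MeasurableSpace S] (τ : A → Kernel S S)
    (c : ℝ) (μ ν : Measure S) : ℝ :=
  ⨆ w : List A, c ^ w.length *
    |(wstep τ w μ Set.univ).toReal - (wstep τ w ν Set.univ).toReal|

/-- An approximating bisimulation relation with discounting factor c. -/
def IsApproxBisim {S A : Type*} [MeasurableSpace S] (τ : A → Kernel S S)
    (c : ℝ) (Rf : ℝ → Measure S → Measure S → Prop) : Prop :=
  ∀ ε : ℝ, 0 < ε → Symmetric (Rf ε) ∧
    ∀ μ ν, Rf ε μ ν →
      |(μ Set.univ).toReal - (ν Set.univ).toReal| ≤ ε ∧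
      ∀ a, Rf (ε / c) (step τ a μ) (step τ a ν)

/-! The relations `ρ R_ε σ :⟺ ∀ w, c^|w| |ρ_w(S) - σ_w(S)| ≤ ε` form an approximating bisimulation
(peeling off the first letter of a word costs one factor `c`), and conversely induction on the word
shows that any approximating bisimulation relating `ρ` and `σ` at level `ε` bounds every discounted
term by `ε`. Since transitions are sub-Markov and `c ≤ 1`, all terms lie in `[0, 1]`, so `d^c` is a
genuine least upper bound and `d^c(μ, ν) ≤ ε'` means exactly that every term is at most `ε'`. -/

section ApproxBisim

variable {S A : Type*} [MeasurableSpace S] {τ : A → Kernel S S}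

lemma IsSubdist.step (hτ : IsSubMarkov τ) (a : A) {μ : Measure S} (hμ : IsSubdist μ) :
    IsSubdist (step τ a μ) := by
  unfold IsSubdist _root_.step at *
  rw [Measure.bind_apply MeasurableSet.univ (τ a).measurable.aemeasurable]
  calc ∫⁻ s, τ a s Set.univ ∂μ ≤ ∫⁻ _, 1 ∂μ := lintegral_mono fun s => hτ a s
    _ = μ Set.univ := by simp
    _ ≤ 1 := hμ

lemma IsSubdist.wstep (hτ : IsSubMarkov τ) (w : List A) {μ : Measure S} (hμ : IsSubdist μ) :
    IsSubdist (wstep τ w μ) := by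
  induction w generalizing μ with
  | nil => exact hμ
  | cons a w ih => exact ih (hμ.step hτ a)

lemma IsSubdist.toReal_le_one {μ : Measure S} (hμ : IsSubdist μ) : (μ Set.univ).toReal ≤ 1 :=
  ENNReal.toReal_le_of_le_ofReal zero_le_one (by simpa [IsSubdist] using hμ)

variable (τ) in
noncomputable def discountedGap (c : ℝ) (w : List A) (μ ν : Measure S) : ℝ :=
  c ^ w.length * |(wstep τ w μ Set.univ).toReal - (wstep τ w ν Set.univ).toReal|

lemma discountedGap_nil (c : ℝ) (μ ν : Measure S) :
    discountedGap τ c [] μ ν = |(μ Set.univ).toReal - (ν Set.univ).toReal| := by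
  simp [discountedGap, wstep]

lemma discountedGap_cons (c : ℝ) (a : A) (w : List A) (μ ν : Measure S) :
    discountedGap τ c (a :: w) μ ν = c * discountedGap τ c w (step τ a μ) (step τ a ν) := by
  simp only [discountedGap, wstep, List.length_cons, pow_succ]
  ring

lemma discountedGap_comm (c : ℝ) (w : List A) (μ ν : Measure S) :
    discountedGap τ c w μ ν = discountedGap τ c w ν μ := by
  rw [discountedGap, discountedGap, abs_sub_comm]

lemma discountedGap_le_one (hτ : IsSubMarkov τ) {c : ℝ} (hc : c ∈ Set.Icc (0 : ℝ) 1)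
    (w : List A) {μ ν : Measure S} (hμ : IsSubdist μ) (hν : IsSubdist ν) :
    discountedGap τ c w μ ν ≤ 1 := by
  have hgap : |(wstep τ w μ Set.univ).toReal - (wstep τ w ν Set.univ).toReal| ≤ 1 :=
    abs_sub_le_of_nonneg_of_le ENNReal.toReal_nonneg ((hμ.wstep hτ w).toReal_le_one)
      ENNReal.toReal_nonneg ((hν.wstep hτ w).toReal_le_one)
  simpa [discountedGap] using mul_le_mul (pow_le_one₀ hc.1 hc.2) hgap (abs_nonneg _) zero_le_one

lemma dC_le_iff (hτ : IsSubMarkov τ) {c : ℝ} (hc : c ∈ Set.Icc (0 : ℝ) 1) {μ ν : Measure S}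
    (hμ : IsSubdist μ) (hν : IsSubdist ν) {ε : ℝ} :
    dC τ c μ ν ≤ ε ↔ ∀ w, discountedGap τ c w μ ν ≤ ε :=
  ciSup_le_iff ⟨1, by rintro _ ⟨w, rfl⟩; exact discountedGap_le_one hτ hc w hμ hν⟩

variable (τ) in
def gapRel (c ε : ℝ) (ρ σ : Measure S) : Prop :=
  ∀ w, discountedGap τ c w ρ σ ≤ ε

lemma isApproxBisim_gapRel {c : ℝ} (hc : 0 < c) : IsApproxBisim τ c (gapRel τ c) := by
  intro ε _
  refine ⟨fun ρ σ h w => discountedGap_comm (τ := τ) c w ρ σ ▸ h w, fun ρ σ h => ⟨?_, ?_⟩⟩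
  · simpa only [discountedGap_nil] using h []
  · intro a w
    rw [le_div_iff₀ hc, mul_comm, ← discountedGap_cons]
    exact h (a :: w)

lemma IsApproxBisim.discountedGap_le {c : ℝ} (hc : 0 < c) {Rf : ℝ → Measure S → Measure S → Prop}
    (hRf : IsApproxBisim τ c Rf) (w : List A) {ε : ℝ} (hε : 0 < ε) {ρ σ : Measure S}
    (h : Rf ε ρ σ) : discountedGap τ c w ρ σ ≤ ε := by
  induction w generalizing ε ρ σ with
  | nil => simpa only [discountedGap_nil] using ((hRf ε hε).2 ρ σ h).1
  | cons a w ih =>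
    have hnext := ih (div_pos hε hc) (((hRf ε hε).2 ρ σ h).2 a)
    rw [discountedGap_cons, mul_comm, ← le_div_iff₀ hc]
    exact hnext

end ApproxBisim

/-- `∼_ε'^c` coincides with `≈_ε'^c`. -/
theorem approx_metric_iff_approx_relation {S A : Type*} [MeasurableSpace S]
    (τ : A → Kernel S S) (hτ : IsSubMarkov τ) (c : ℝ) (hc : c ∈ Set.Ioc (0:ℝ) 1)
    (ε' : ℝ) (hε' : 0 < ε') (μ ν : Measure S) (hμ : IsSubdist μ) (hν : IsSubdist ν) :
    dC τ c μ ν ≤ ε' ↔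
      ∃ Rf : ℝ → Measure S → Measure S → Prop, IsApproxBisim τ c Rf ∧ Rf ε' μ ν := by
  rw [dC_le_iff hτ (Set.Ioc_subset_Icc_self hc) hμ hν]
  exact ⟨fun h => ⟨gapRel τ c, isApproxBisim_gapRel hc.1, h⟩,
    fun ⟨Rf, hRf, h⟩ w => hRf.discountedGap_le hc.1 w hε' h⟩
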